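/- Let z_1,…,z_r ∈ ℤ^d be generating vectors and n_1,…,n_r ≥ 1 integer moduli, let A ⊂ ℤ^d be an anti-aliasing set, and let û : ℤ^d → ℂ be absolutely summable. Then ( Σ_{h ∈ ℤ^d∖A} |û(h)|² + Σ_{h ∈ A} | Σ_{ℓ ∈ Λ^⊥, ℓ ≠ 0} û(h + ℓ) |² )^{1/2} ≤ 2 · Σ_{h ∈ ℤ^d∖A} |û(h)|. (By Parseval's identity, the left-hand side equals the L₂(𝕋^d) norm of u − I u, where u is the function with Fourier coefficients û and I u is its trigonometric interpolant on the lattice points with frequencies in A.) -/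

import Mathlib

/-!
Write `S = Σ_{h ∉ A} |û(h)|`. The first sum is at most `S²` because every term `|û(h)|` is at
most `S`. For the second, the map `(h, ℓ) ↦ h + ℓ` from `A × (Λ^⊥ ∖ {0})` is injective with
image outside `A`, precisely because `A` is anti-aliasing; hence
`Σ_{h ∈ A} |Σ_ℓ û(h + ℓ)| ≤ Σ_{h ∈ A} Σ_ℓ |û(h + ℓ)| ≤ S`, and the sum of squares is at most
`S²` as well. So the left-hand side is at most `√2 · S ≤ 2 S`.
-/

noncomputable section

/-- Integer dot product on `ℤ^d`. -/
def dotZ {d : ℕ} (h z : Fin d → ℤ) : ℤ := ∑ i, h i * z i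

/-- Membership in the dual lattice `Λ^⊥`. -/
def InDual {d r : ℕ} (z : Fin r → Fin d → ℤ) (n : Fin r → ℕ) (h : Fin d → ℤ) : Prop :=
  ∀ j, (n j : ℤ) ∣ dotZ h (z j)

theorem tsum_sq_le_sq_tsum {ι : Type*} {f : ι → ℝ} (hf0 : ∀ i, 0 ≤ f i) (hf : Summable f) :
    ∑' i, f i ^ 2 ≤ (∑' i, f i) ^ 2 :=
  Real.tsum_le_of_sum_le (fun i => sq_nonneg (f i)) fun s =>
    (Finset.sum_sq_le_sq_sum_of_nonneg fun i _ => hf0 i).trans <|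
      pow_le_pow_left₀ (s.sum_nonneg fun i _ => hf0 i) (hf.sum_le_tsum s fun i _ => hf0 i) 2

def IsAntiAliasing {G : Type*} [AddCommGroup G] (Λ : AddSubgroup G) (A : Finset G) : Prop :=
  ∀ h ∈ A, ∀ h' ∈ A, h ≠ h' → h - h' ∉ Λ

namespace IsAntiAliasing

variable {G : Type*} [AddCommGroup G] {Λ : AddSubgroup G} {A : Finset G}

theorem add_notMem (hA : IsAntiAliasing Λ A) {h ℓ : G} (hh : h ∈ A) (hℓ0 : ℓ ≠ 0)
    (hℓ : ℓ ∈ Λ) : h + ℓ ∉ A := fun hhℓ =>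
  hA (h + ℓ) hhℓ h hh (by simpa using hℓ0) (by simpa using hℓ)

theorem injective_add (hA : IsAntiAliasing Λ A) :
    Function.Injective fun p : A × {ℓ : G // ℓ ≠ 0 ∧ ℓ ∈ Λ} => (p.1 : G) + p.2 := by
  rintro ⟨⟨h₁, hh₁⟩, ⟨ℓ₁, hℓ₁⟩⟩ ⟨⟨h₂, hh₂⟩, ⟨ℓ₂, hℓ₂⟩⟩ (heq : h₁ + ℓ₁ = h₂ + ℓ₂)
  obtain rfl : h₁ = h₂ := by
    by_contra hne
    refine hA h₁ hh₁ h₂ hh₂ hne ?_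
    rw [show h₁ - h₂ = ℓ₂ - ℓ₁ by rw [sub_eq_sub_iff_add_eq_add, heq, add_comm]]
    exact Λ.sub_mem hℓ₂.2 hℓ₁.2
  obtain rfl : ℓ₁ = ℓ₂ := add_left_cancel heq
  rfl

theorem sum_tsum_add_le (hA : IsAntiAliasing Λ A) {g : G → ℝ} (hg0 : ∀ x, 0 ≤ g x)
    (hg : Summable g) :
    ∑ h ∈ A, ∑' ℓ : {ℓ : G // ℓ ≠ 0 ∧ ℓ ∈ Λ}, g (h + ℓ) ≤ ∑' x : {x : G // x ∉ A}, g x := by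
  have hinner (h : G) : Summable fun ℓ : {ℓ : G // ℓ ≠ 0 ∧ ℓ ∈ Λ} => g (h + ℓ) :=
    hg.comp_injective ((add_right_injective h).comp Subtype.val_injective)
  let shift : A × {ℓ : G // ℓ ≠ 0 ∧ ℓ ∈ Λ} → {x : G // x ∉ A} :=
    fun p => ⟨p.1 + p.2, hA.add_notMem p.1.2 p.2.2.1 p.2.2.2⟩
  have hshift : Function.Injective shift := fun p q hpq =>
    hA.injective_add (congrArg Subtype.val hpq)
  calc ∑ h ∈ A, ∑' ℓ : {ℓ : G // ℓ ≠ 0 ∧ ℓ ∈ Λ}, g (h + ℓ)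
      = ∑' p : A × {ℓ : G // ℓ ≠ 0 ∧ ℓ ∈ Λ}, g (p.1 + p.2) := by
        rw [← Finset.tsum_subtype]
        exact ((hg.comp_injective hA.injective_add).tsum_prod' fun h => hinner h).symm
    _ ≤ ∑' x : {x : G // x ∉ A}, g x :=
        tsum_comp_le_tsum_of_inj (hg.subtype _) (fun x => hg0 x.1) hshift

theorem sum_norm_tsum_add_sq_le (hA : IsAntiAliasing Λ A) {E : Type*}
    [SeminormedAddCommGroup E] {f : G → E} (hf : Summable fun x => ‖f x‖) :
    ∑ h ∈ A, ‖∑' ℓ : {ℓ : G // ℓ ≠ 0 ∧ ℓ ∈ Λ}, f (h + ℓ)‖ ^ 2 ≤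
      (∑' x : {x : G // x ∉ A}, ‖f x‖) ^ 2 := by
  have hnorm (h : G) : ‖∑' ℓ : {ℓ : G // ℓ ≠ 0 ∧ ℓ ∈ Λ}, f (h + ℓ)‖ ≤
      ∑' ℓ : {ℓ : G // ℓ ≠ 0 ∧ ℓ ∈ Λ}, ‖f (h + ℓ)‖ :=
    norm_tsum_le_tsum_norm <|
      hf.comp_injective ((add_right_injective h).comp Subtype.val_injective)
  calc ∑ h ∈ A, ‖∑' ℓ : {ℓ : G // ℓ ≠ 0 ∧ ℓ ∈ Λ}, f (h + ℓ)‖ ^ 2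
      ≤ ∑ h ∈ A, (∑' ℓ : {ℓ : G // ℓ ≠ 0 ∧ ℓ ∈ Λ}, ‖f (h + ℓ)‖) ^ 2 := by
        gcongr with h; exact hnorm h
    _ ≤ (∑ h ∈ A, ∑' ℓ : {ℓ : G // ℓ ≠ 0 ∧ ℓ ∈ Λ}, ‖f (h + ℓ)‖) ^ 2 :=
        Finset.sum_sq_le_sq_sum_of_nonneg fun h _ => tsum_nonneg fun ℓ => norm_nonneg (f (h + ℓ))
    _ ≤ (∑' x : {x : G // x ∉ A}, ‖f x‖) ^ 2 := by
        gcongr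
        exact hA.sum_tsum_add_le (fun x => norm_nonneg (f x)) hf

end IsAntiAliasing

def dualLattice {d r : ℕ} (z : Fin r → Fin d → ℤ) (n : Fin r → ℕ) :
    AddSubgroup (Fin d → ℤ) where
  carrier := {h | InDual z n h}
  zero_mem' j := by simp [dotZ]
  add_mem' ha hb j := by
    simpa [dotZ, add_mul, Finset.sum_add_distrib] using dvd_add (ha j) (hb j)
  neg_mem' ha j := by simpa [dotZ] using (ha j).neg_right

theorem truncation_interpolation_bound
    (d r : ℕ)
    (z : Fin r → Fin d → ℤ) (n : Fin r → ℕ)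
    (A : Finset (Fin d → ℤ))
    (hA : ∀ h ∈ A, ∀ h' ∈ A, h ≠ h' → ¬ InDual z n (h - h'))
    (uhat : (Fin d → ℤ) → ℂ) (hu : Summable fun m : Fin d → ℤ => ‖uhat m‖) :
    Real.sqrt
        ((∑' h : {h : Fin d → ℤ // h ∉ A}, ‖uhat h.1‖ ^ 2) +
          ∑ h ∈ A,
            ‖∑' ℓ : {ℓ : Fin d → ℤ // ℓ ≠ 0 ∧ InDual z n ℓ}, uhat (h + ℓ.1)‖ ^ 2)
      ≤ 2 * ∑' h : {h : Fin d → ℤ // h ∉ A}, ‖uhat h.1‖ := by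
  set S := ∑' h : {h : Fin d → ℤ // h ∉ A}, ‖uhat h.1‖
  have hS : 0 ≤ S := tsum_nonneg fun _ => norm_nonneg _
  have hout : ∑' h : {h : Fin d → ℤ // h ∉ A}, ‖uhat h.1‖ ^ 2 ≤ S ^ 2 :=
    tsum_sq_le_sq_tsum (fun _ => norm_nonneg _) (hu.subtype _)
  have hin : ∑ h ∈ A,
      ‖∑' ℓ : {ℓ : Fin d → ℤ // ℓ ≠ 0 ∧ InDual z n ℓ}, uhat (h + ℓ.1)‖ ^ 2 ≤ S ^ 2 :=
    IsAntiAliasing.sum_norm_tsum_add_sq_le (Λ := dualLattice z n) hA hu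
  rw [Real.sqrt_le_left (by positivity)]
  nlinarith

end
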